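/- arXiv:1606.03150 — 2 statements merged into one kernel-verified Lean document; each statement's English description precedes it below -/
import Mathlib

section
/- Let X ~ Gamma(m+1, λ) with m ∈ ℕ, λ > 0, and let θ > 0, η > 0 be constants. Define γ = X / (θ + ηX). Then for 0 ≤ s < 1/η, the CDF of γ satisfies P(γ < s) = 1 - exp(-θs·λ/(1-ηs)) · Σ_{i=0}^{m} (1/i!)(θsλ/(1-ηs))^i, and for s ≥ 1/η, P(γ < s) = 1. -/
open MeasureTheory ProbabilityTheory Real Filter

/-!
For `x ≥ 0` the map `x ↦ x / (θ + η x)` is increasing with supremum `1 / η`, so `γ < s` is the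
event `X < θ s / (1 - η s)` when `η s < 1` and the sure event when `s ≥ 1 / η`. The first
probability is the Erlang distribution function, obtained by integrating the density against the
antiderivative `1 - e^{-λx} ∑_{i ≤ m} (λx)^i / i!`.
-/

open Set
open scoped Nat

lemma hasDerivAt_exp_neg_mul_sum_pow_div_factorial (m : ℕ) (y : ℝ) :
    HasDerivAt (fun y => exp (-y) * ∑ i ∈ Finset.range (m + 1), 1 / (i ! : ℝ) * y ^ i)
      (-(exp (-y) * y ^ m / m !)) y := by
  have hexp : HasDerivAt (fun y => exp (-y)) (-exp (-y)) y := by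
    simpa using (hasDerivAt_neg y).exp
  induction m with
  | zero => simpa using hexp
  | succ n ih =>
    simp only [Finset.sum_range_succ _ (n + 1), mul_add]
    have hterm := hexp.mul ((hasDerivAt_pow (n + 1) y).const_mul (1 / ((n + 1) ! : ℝ)))
    refine (ih.add hterm).congr_deriv ?_
    rw [Nat.factorial_succ, Nat.cast_mul]
    field_simp
    push_cast
    ring

lemma integral_erlang_density (m : ℕ) (lam c : ℝ) :
    ∫ x in (0 : ℝ)..c, lam ^ (m + 1) * x ^ m * exp (-(lam * x)) / m !
      = 1 - exp (-(lam * c)) * ∑ i ∈ Finset.range (m + 1), 1 / (i ! : ℝ) * (lam * c) ^ i := by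
  have hderiv : ∀ x ∈ uIcc (0 : ℝ) c, HasDerivAt
      (fun y => 1 - exp (-(lam * y)) * ∑ i ∈ Finset.range (m + 1), 1 / (i ! : ℝ) * (lam * y) ^ i)
      (lam ^ (m + 1) * x ^ m * exp (-(lam * x)) / m !) x := by
    intro x _
    have hlin : HasDerivAt (fun y => lam * y) lam x := by
      simpa using (hasDerivAt_id x).const_mul lam
    refine (((hasDerivAt_exp_neg_mul_sum_pow_div_factorial m (lam * x)).comp x hlin).const_sub
      1).congr_deriv ?_
    rw [mul_pow]
    ring
  rw [intervalIntegral.integral_eq_sub_of_hasDerivAt hderiv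
    (Continuous.intervalIntegrable (by fun_prop) 0 c)]
  simp [Finset.sum_range_succ']

lemma gammaPDF_natCast_add_one (m : ℕ) (lam : ℝ) {x : ℝ} (hx : 0 ≤ x) :
    gammaPDF (m + 1) lam x = ENNReal.ofReal (lam ^ (m + 1) * x ^ m * exp (-(lam * x)) / m !) := by
  rw [gammaPDF_of_nonneg hx, add_sub_cancel_right, Real.rpow_natCast, Real.Gamma_nat_eq_factorial,
    ← Nat.cast_add_one, Real.rpow_natCast]
  ring_nf

lemma gammaMeasure_Ico_zero (m : ℕ) {lam c : ℝ} (hlam : 0 ≤ lam) (hc : 0 ≤ c) :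
    gammaMeasure (m + 1) lam (Ico 0 c)
      = ENNReal.ofReal (1 - exp (-(lam * c)) *
          ∑ i ∈ Finset.range (m + 1), 1 / (i ! : ℝ) * (lam * c) ^ i) := by
  rw [gammaMeasure, withDensity_apply _ measurableSet_Ico,
    setLIntegral_congr_fun measurableSet_Ico fun x hx => gammaPDF_natCast_add_one m lam hx.1,
    ← ofReal_integral_eq_lintegral_ofReal, integral_Ico_eq_integral_Ioo,
    ← integral_Ioc_eq_integral_Ioo, ← intervalIntegral.integral_of_le hc,
    integral_erlang_density]
  · exact (Continuous.integrableOn_Icc (by fun_prop)).mono_set Ico_subset_Icc_self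
  · filter_upwards [ae_restrict_mem measurableSet_Ico] with x hx
    have := hx.1
    positivity

lemma gammaMeasure_inter_Ici_zero (a r : ℝ) (S : Set ℝ) :
    gammaMeasure a r (S ∩ Ici 0) = gammaMeasure a r S := by
  refine measure_inter_conull ?_
  rw [compl_Ici, gammaMeasure, withDensity_apply _ measurableSet_Iio]
  exact lintegral_gammaPDF_of_nonpos le_rfl

lemma div_add_mul_lt_iff {θ η s x : ℝ} (hθ : 0 < θ) (hη : 0 ≤ η) (hηs : η * s < 1)
    (hx : 0 ≤ x) : x / (θ + η * x) < s ↔ x < θ * s / (1 - η * s) := by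
  rw [div_lt_iff₀ (by positivity), lt_div_iff₀ (by linarith)]
  constructor <;> intro h <;> linarith

lemma setOf_div_add_mul_lt_inter_Ici {θ η s : ℝ} (hθ : 0 < θ) (hη : 0 ≤ η) (hηs : η * s < 1) :
    {x | x / (θ + η * x) < s} ∩ Ici 0 = Ico 0 (θ * s / (1 - η * s)) := by
  ext x
  simp only [mem_inter_iff, mem_ofPred_eq, Set.mem_Ici, Set.mem_Ico]
  constructor
  · rintro ⟨h, hx⟩
    exact ⟨hx, (div_add_mul_lt_iff hθ hη hηs hx).mp h⟩
  · rintro ⟨hx, h⟩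
    exact ⟨(div_add_mul_lt_iff hθ hη hηs hx).mpr h, hx⟩

lemma div_add_mul_lt_one_div {θ η x : ℝ} (hθ : 0 < θ) (hη : 0 < η) (hx : 0 ≤ x) :
    x / (θ + η * x) < 1 / η := by
  rw [div_lt_div_iff₀ (by positivity) hη]
  linarith

lemma MeasureTheory.Measure.measure_preimage_of_map_eq {α β : Type*} [MeasurableSpace α]
    [MeasurableSpace β] {μ : Measure α} {ν : Measure β} [NeZero ν] {X : α → β}
    (hX : μ.map X = ν) {S : Set β} (hS : MeasurableSet S) : μ (X ⁻¹' S) = ν S := by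
  have : NeZero (μ.map X) := hX ▸ inferInstance
  rw [← hX, Measure.map_apply_of_aemeasurable (aemeasurable_of_map_neZero this) hS]

theorem stmt_1_general {Ω : Type*} [MeasurableSpace Ω] (P : Measure Ω)
    (m : ℕ) (lam : ℝ) (hlam : 0 < lam) (X : Ω → ℝ)
    (hX : Measure.map X P = gammaMeasure (m + 1) lam)
    (θ η : ℝ) (hθ : 0 < θ) (hη : 0 < η) (s : ℝ) :
    (0 ≤ s → s < 1 / η →
      P {ω | X ω / (θ + η * X ω) < s} =
        ENNReal.ofReal
          (1 - Real.exp (-(θ * s * lam / (1 - η * s))) *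
            ∑ i ∈ Finset.range (m + 1),
              (1 / (Nat.factorial i : ℝ)) * (θ * s * lam / (1 - η * s)) ^ i)) ∧
    (1 / η ≤ s → P {ω | X ω / (θ + η * X ω) < s} = 1) := by
  have : IsProbabilityMeasure (gammaMeasure (m + 1) lam) :=
    isProbabilityMeasure_gammaMeasure (by positivity) hlam
  have hP : P {ω | X ω / (θ + η * X ω) < s} = gammaMeasure (m + 1) lam {x | x / (θ + η * x) < s} :=
    Measure.measure_preimage_of_map_eq hX (S := {x | x / (θ + η * x) < s})
      (measurableSet_lt (by fun_prop) measurable_const)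
  rw [hP, ← gammaMeasure_inter_Ici_zero]
  constructor
  · intro hs0 hs
    have hηs : η * s < 1 := by rwa [lt_div_iff₀ hη, mul_comm] at hs
    rw [setOf_div_add_mul_lt_inter_Ici hθ hη.le hηs,
      gammaMeasure_Ico_zero m hlam.le (div_nonneg (by positivity) (by linarith)),
      show lam * (θ * s / (1 - η * s)) = θ * s * lam / (1 - η * s) by ring]
  · intro hs
    have hsub : Ici 0 ⊆ {x | x / (θ + η * x) < s} := fun x hx =>
      (div_add_mul_lt_one_div hθ hη hx).trans_le hs
    rw [inter_eq_right.mpr hsub, ← univ_inter (Ici 0), gammaMeasure_inter_Ici_zero, measure_univ]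

/-- CDF of γ = X/(θ+ηX) for X ~ Gamma(m+1, λ). -/
theorem stmt_1 {Ω : Type*} [MeasurableSpace Ω] (P : Measure Ω) [IsProbabilityMeasure P]
    (m : ℕ) (lam : ℝ) (hlam : 0 < lam) (X : Ω → ℝ) (hXmeas : Measurable X)
    (hX : Measure.map X P = gammaMeasure (m + 1) lam)
    (θ η : ℝ) (hθ : 0 < θ) (hη : 0 < η) (s : ℝ) :
    (0 ≤ s → s < 1 / η →
      P {ω | X ω / (θ + η * X ω) < s} =
        ENNReal.ofReal
          (1 - Real.exp (-(θ * s * lam / (1 - η * s))) *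
            ∑ i ∈ Finset.range (m + 1),
              (1 / (Nat.factorial i : ℝ)) * (θ * s * lam / (1 - η * s)) ^ i)) ∧
    (1 / η ≤ s → P {ω | X ω / (θ + η * X ω) < s} = 1) :=
  stmt_1_general P m lam hlam X hX θ η hθ hη s
end

section
/- For any a > 0 and nonnegative integer n, ∫_0^∞ ln(1 + a·x) · x^n · e^{-x} dx = n! · Σ_{μ=0}^{n} (1/(n-μ)!) · [ (-1)^{n-μ-1} a^{-(n-μ)} e^{1/a} Ei(-1/a) + Σ_{k=1}^{n-μ} (k-1)! · (-1/a)^{n-μ-k} ], where Ei(z) = -∫_{-z}^∞ e^{-t}/t dt is the exponential integral. -/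
/-!
Write `I n = ∫₀^∞ log (1 + a x) xⁿ e⁻ˣ dx` and `K m = ∫₀^∞ xᵐ e⁻ˣ / (1 + a x) dx`.
Integrating the derivative of `log (1 + a x) xⁿ e⁻ˣ`, which vanishes at `0` and at `∞`, gives
`I n = n I (n - 1) + a K n`, hence `I n = n! ∑_{m ≤ n} a K m / m!`.
Since `a x / (1 + a x) = 1 - 1 / (1 + a x)`, we get `a K (m + 1) = m! - K m`, and the substitution
`t = x + 1/a` gives `a K 0 = -e^{1/a} Ei(-1/a)`. The bracket of the closed form satisfies the same
recursion with the same initial value, so it equals `a K m`.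
-/

open MeasureTheory Real Filter

/-- The exponential integral `Ei z = -∫_{-z}^∞ e^{-t}/t dt`. -/
noncomputable def expIntegralEi (z : ℝ) : ℝ := -∫ t in Set.Ioi (-z), Real.exp (-t) / t

open Set
open scoped Nat Topology

theorem setIntegral_Ioi_comp_add_right {E : Type*} [NormedAddCommGroup E] [NormedSpace ℝ E]
    (g : ℝ → E) (c d : ℝ) : ∫ x in Ioi c, g (x + d) = ∫ x in Ioi (c + d), g x := by
  simpa using (measurePreserving_add_right volume d).setIntegral_preimage_emb
    (MeasurableEquiv.addRight d).measurableEmbedding g (Ioi (c + d))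

theorem integrableOn_pow_mul_exp_neg (m : ℕ) :
    IntegrableOn (fun x : ℝ => x ^ m * exp (-x)) (Ioi 0) :=
  (GammaIntegral_convergent (s := m + 1) (by positivity)).congr_fun (fun x _ => by
    dsimp only; rw [add_sub_cancel_right, rpow_natCast, mul_comm]) measurableSet_Ioi

theorem integral_pow_mul_exp_neg (m : ℕ) :
    ∫ x in Ioi (0 : ℝ), x ^ m * exp (-x) = m ! := by
  rw [← Gamma_nat_eq_factorial, Gamma_eq_integral (by positivity)]
  refine setIntegral_congr_fun measurableSet_Ioi fun x _ => ?_
  rw [add_sub_cancel_right, rpow_natCast, mul_comm]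

namespace GradshteynRyzhik

variable {a : ℝ}

theorem abs_log_one_add_mul_mul_pow_mul_exp_neg_le (ha : 0 ≤ a) {x : ℝ} (hx : 0 ≤ x) (m : ℕ) :
    |log (1 + a * x) * x ^ m * exp (-x)| ≤ a * (x ^ (m + 1) * exp (-x)) := by
  have hlog₀ : 0 ≤ log (1 + a * x) := log_nonneg (by nlinarith)
  have hlog : log (1 + a * x) ≤ a * x := by
    linarith [log_le_sub_one_of_pos (show 0 < 1 + a * x by nlinarith)]
  rw [abs_of_nonneg (by positivity)]
  calc log (1 + a * x) * x ^ m * exp (-x) ≤ a * x * x ^ m * exp (-x) := by gcongr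
    _ = a * (x ^ (m + 1) * exp (-x)) := by ring

theorem integrableOn_log_one_add_mul_mul_pow_mul_exp_neg (ha : 0 ≤ a) (m : ℕ) :
    IntegrableOn (fun x : ℝ => log (1 + a * x) * x ^ m * exp (-x)) (Ioi 0) := by
  refine ((integrableOn_pow_mul_exp_neg (m + 1)).const_mul a).mono'
    (by fun_prop : Measurable _).aestronglyMeasurable ?_
  filter_upwards [ae_restrict_mem measurableSet_Ioi] with x (hx : 0 < x)
  exact abs_log_one_add_mul_mul_pow_mul_exp_neg_le ha hx.le m

theorem integrableOn_pow_mul_exp_neg_div_one_add_mul (ha : 0 ≤ a) (m : ℕ) :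
    IntegrableOn (fun x : ℝ => x ^ m * exp (-x) / (1 + a * x)) (Ioi 0) := by
  refine (integrableOn_pow_mul_exp_neg m).mono'
    (by fun_prop : Measurable _).aestronglyMeasurable ?_
  filter_upwards [ae_restrict_mem measurableSet_Ioi] with x (hx : 0 < x)
  rw [norm_div, norm_of_nonneg (by positivity), norm_of_nonneg (by positivity)]
  exact div_le_self (by positivity) (by nlinarith)

noncomputable def logMoment (a : ℝ) (n : ℕ) : ℝ :=
  ∫ x in Ioi 0, log (1 + a * x) * x ^ n * exp (-x)

noncomputable def divMoment (a : ℝ) (m : ℕ) : ℝ :=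
  ∫ x in Ioi 0, x ^ m * exp (-x) / (1 + a * x)

theorem hasDerivAt_log_one_add_mul_mul_pow_mul_exp_neg (ha : 0 ≤ a) {x : ℝ} (hx : 0 ≤ x)
    (n : ℕ) :
    HasDerivAt (fun x => log (1 + a * x) * x ^ n * exp (-x))
      (a * (x ^ n * exp (-x) / (1 + a * x)) + n * (log (1 + a * x) * x ^ (n - 1) * exp (-x))
        - log (1 + a * x) * x ^ n * exp (-x)) x := by
  have hlin : HasDerivAt (fun x => 1 + a * x) a x := by
    simpa using ((hasDerivAt_id x).const_mul a).const_add 1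
  have hexp : HasDerivAt (fun x => exp (-x)) (-exp (-x)) x := by
    simpa using (hasDerivAt_neg x).exp
  refine (((hlin.log (by nlinarith)).mul (hasDerivAt_pow n x)).mul hexp).congr_deriv ?_
  simp only [Pi.mul_apply]
  field_simp
  ring

theorem logMoment_eq (ha : 0 ≤ a) (n : ℕ) :
    logMoment a n = n * logMoment a (n - 1) + a * divMoment a n := by
  have hA := (integrableOn_pow_mul_exp_neg_div_one_add_mul ha n).const_mul a
  have hB := (integrableOn_log_one_add_mul_mul_pow_mul_exp_neg ha (n - 1)).const_mul (n : ℝ)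
  have hAB : IntegrableOn (fun x => a * (x ^ n * exp (-x) / (1 + a * x))
      + n * (log (1 + a * x) * x ^ (n - 1) * exp (-x))) (Ioi 0) := hA.add hB
  have hI := integrableOn_log_one_add_mul_mul_pow_mul_exp_neg ha n
  have hvanish : Tendsto (fun x => log (1 + a * x) * x ^ n * exp (-x)) atTop (𝓝 0) := by
    refine squeeze_zero_norm' ?_
      (by simpa using (tendsto_pow_mul_exp_neg_atTop_nhds_zero (n + 1)).const_mul a)
    filter_upwards [eventually_ge_atTop 0] with x hx
    exact abs_log_one_add_mul_mul_pow_mul_exp_neg_le ha hx n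
  have hFTC := integral_Ioi_of_hasDerivAt_of_tendsto'
    (fun x (hx : 0 ≤ x) => hasDerivAt_log_one_add_mul_mul_pow_mul_exp_neg ha hx n)
    (hAB.sub hI) hvanish
  rw [integral_sub hAB hI, integral_add hA hB, integral_const_mul, integral_const_mul]
    at hFTC
  simp only [mul_zero, add_zero, log_one, zero_mul, sub_zero] at hFTC
  rw [logMoment, logMoment, divMoment]
  linarith

theorem mul_divMoment_succ (ha : 0 ≤ a) (m : ℕ) :
    a * divMoment a (m + 1) = (m ! : ℝ) - divMoment a m := by
  have hsplit : ∀ x ∈ Ioi (0 : ℝ), a * (x ^ (m + 1) * exp (-x) / (1 + a * x))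
      = x ^ m * exp (-x) - x ^ m * exp (-x) / (1 + a * x) := fun x (hx : 0 < x) => by
    field_simp [show 1 + a * x ≠ 0 by nlinarith]
    ring
  rw [divMoment, ← integral_const_mul, setIntegral_congr_fun measurableSet_Ioi hsplit,
    integral_sub (integrableOn_pow_mul_exp_neg m)
      (integrableOn_pow_mul_exp_neg_div_one_add_mul ha m), integral_pow_mul_exp_neg, divMoment]

theorem mul_divMoment_zero (ha : 0 < a) :
    a * divMoment a 0 = -(exp (1 / a) * expIntegralEi (-(1 / a))) := by
  have hshift : ∀ x ∈ Ioi (0 : ℝ), x ^ 0 * exp (-x) / (1 + a * x)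
      = exp (1 / a) / a * (exp (-(x + 1 / a)) / (x + 1 / a)) := fun x (hx : 0 < x) => by
    rw [pow_zero, one_mul, neg_add, exp_add, exp_neg (1 / a)]
    field_simp
    ring
  rw [divMoment, setIntegral_congr_fun measurableSet_Ioi hshift, integral_const_mul,
    setIntegral_Ioi_comp_add_right (fun t => exp (-t) / t), zero_add, expIntegralEi, neg_neg]
  field_simp

/-- The bracket of the closed form, as a function of `m = n - μ`. -/
noncomputable def eiBracket (a : ℝ) (m : ℕ) : ℝ :=
  (-1 : ℝ) ^ ((m : ℤ) - 1) * a ^ (-(m : ℤ)) * exp (1 / a) * expIntegralEi (-(1 / a)) +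
    ∑ k ∈ Finset.Icc 1 m, ((k - 1) ! : ℝ) * (-(1 / a)) ^ ((m : ℤ) - k)

theorem eiBracket_zero : eiBracket a 0 = -(exp (1 / a) * expIntegralEi (-(1 / a))) := by
  simp [eiBracket]

theorem eiBracket_succ (ha : a ≠ 0) (m : ℕ) :
    eiBracket a (m + 1) = (m ! : ℝ) - eiBracket a m / a := by
  have hlead : (-1 : ℝ) ^ (((m + 1 : ℕ) : ℤ) - 1) * a ^ (-((m + 1 : ℕ) : ℤ))
      = -((-1 : ℝ) ^ ((m : ℤ) - 1) * a ^ (-(m : ℤ))) / a := by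
    push_cast
    rw [add_sub_cancel_right, neg_add, zpow_add₀ ha, zpow_sub_one₀ (by norm_num), zpow_neg_one]
    ring
  have hpow : ∀ k ∈ Finset.Icc 1 m, (-(1 / a)) ^ (((m + 1 : ℕ) : ℤ) - k)
      = -(-(1 / a)) ^ ((m : ℤ) - k) / a := fun k _ => by
    rw [show ((m + 1 : ℕ) : ℤ) - k = (m : ℤ) - k + 1 by push_cast; ring,
      zpow_add_one₀ (by simpa using ha)]
    ring
  rw [eiBracket, eiBracket, Finset.sum_Icc_succ_top (by omega), hlead,
    Finset.sum_congr rfl fun k hk => by rw [hpow k hk]]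
  simp only [Nat.add_sub_cancel, sub_self, zpow_zero, mul_one, mul_neg, mul_div_assoc',
    Finset.sum_neg_distrib, ← Finset.sum_div]
  ring

theorem mul_divMoment_eq_eiBracket (ha : 0 < a) (m : ℕ) : a * divMoment a m = eiBracket a m := by
  induction m with
  | zero => rw [mul_divMoment_zero ha, eiBracket_zero]
  | succ m ih =>
    rw [mul_divMoment_succ ha.le, eiBracket_succ ha.ne', ← ih, mul_div_cancel_left₀ _ ha.ne']

theorem logMoment_eq_factorial_mul_sum (ha : 0 ≤ a) (n : ℕ) :
    logMoment a n = n ! * ∑ m ∈ Finset.range (n + 1), a * divMoment a m / m ! := by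
  induction n with
  | zero => rw [logMoment_eq ha 0]; simp
  | succ n ih =>
    rw [logMoment_eq ha, Nat.add_sub_cancel, ih, Finset.sum_range_succ _ (n + 1),
      Nat.factorial_succ]
    push_cast
    field_simp

end GradshteynRyzhik

open GradshteynRyzhik in
/-- Gradshteyn–Ryzhik 4.337.5: closed form of
`∫_0^∞ ln(1+ax) x^n e^{-x} dx` in terms of the exponential integral. -/
theorem stmt_4 (a : ℝ) (ha : 0 < a) (n : ℕ) :
    ∫ x in Set.Ioi (0 : ℝ), Real.log (1 + a * x) * x ^ n * Real.exp (-x) =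
      (Nat.factorial n : ℝ) *
        ∑ μ ∈ Finset.range (n + 1),
          (1 / (Nat.factorial (n - μ) : ℝ)) *
            ((-1 : ℝ) ^ ((n : ℤ) - μ - 1) * a ^ (-((n : ℤ) - μ)) * Real.exp (1 / a) *
                expIntegralEi (-(1 / a)) +
              ∑ k ∈ Finset.Icc 1 (n - μ),
                (Nat.factorial (k - 1) : ℝ) * (-(1 / a)) ^ ((n : ℤ) - μ - k)) := by
  rw [← logMoment, logMoment_eq_factorial_mul_sum ha.le, ← Finset.sum_range_reflect]
  refine congrArg _ (Finset.sum_congr rfl fun μ hμ => ?_)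
  rw [← Nat.cast_sub (Finset.mem_range_succ_iff.mp hμ), Nat.add_sub_cancel, one_div_mul_eq_div,
    mul_divMoment_eq_eiBracket ha, eiBracket]
end
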